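/- arXiv:2304.11652 — 2 statements merged into one kernel-verified Lean document; each statement's English description precedes it below -/
import Mathlib

section
/- (Hyperteam Equivalence) Let φ be an ADIF formula and 𝕏, 𝕏' two hyperteams over supersets of sup(φ) with 𝕏 ≡_{free(φ)} 𝕏'. Then for each alternation flag α ∈ {∃∀,∀∃}: 𝔄, 𝕏 ⊨^α φ iff 𝔄, 𝕏' ⊨^α φ. -/
open scoped Classical

namespace ADIF

/-- A relational first-order structure over a signature given by relation
symbols `RSym` with arities `ar`. -/
structure Struct (RSym : Type) (ar : RSym → ℕ) where
  A : Type
  nonempty : Nonempty A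
  interp : ∀ R : RSym, (Fin (ar R) → A) → Prop

variable {Var RSym : Type} {ar : RSym → ℕ} {A : Type}

/-- Partial assignments from variables to values. -/
abbrev Asg (Var A : Type) := Var → Option A

/-- Teams of assignments. -/
abbrev Team (Var A : Type) := Set (Asg Var A)

/-- Hyperteams: sets of teams. -/
abbrev Hyperteam (Var A : Type) := Set (Team Var A)

/-- The empty assignment. -/
def emptyAsg (Var A : Type) : Asg Var A := fun _ => none

/-- Domain of a partial assignment. -/
def dom (α : Asg Var A) : Set Var := {v | α v ≠ none}

/-- Restriction of an assignment to a set of variables. -/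
noncomputable def restrictA (α : Asg Var A) (W : Set Var) : Asg Var A :=
  fun v => if v ∈ W then α v else none

/-- Restriction of a team. -/
noncomputable def restrictT (X : Team Var A) (W : Set Var) : Team Var A :=
  (fun α => restrictA α W) '' X

/-- Restriction of a hyperteam. -/
noncomputable def restrictH (𝕏 : Hyperteam Var A) (W : Set Var) : Hyperteam Var A :=
  (fun X => restrictT X W) '' 𝕏

/-- The preorder `⊑` on hyperteams. -/
def incl (𝕏₁ 𝕏₂ : Hyperteam Var A) : Prop :=
  ∀ X₁ ∈ 𝕏₁, ∃ X₂ ∈ 𝕏₂, X₂ ⊆ X₁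

/-- The equivalence `≡` on hyperteams. -/
def equivH (𝕏₁ 𝕏₂ : Hyperteam Var A) : Prop :=
  incl 𝕏₁ 𝕏₂ ∧ incl 𝕏₂ 𝕏₁

/-- The preorder `⊑_W` on hyperteams, relativized to variables in `W`. -/
noncomputable def inclW (W : Set Var) (𝕏₁ 𝕏₂ : Hyperteam Var A) : Prop :=
  incl (restrictH 𝕏₁ W) (restrictH 𝕏₂ W)

/-- The equivalence `≡_W` on hyperteams, relativized to variables in `W`. -/
noncomputable def equivW (W : Set Var) (𝕏₁ 𝕏₂ : Hyperteam Var A) : Prop :=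
  equivH (restrictH 𝕏₁ W) (restrictH 𝕏₂ W)

/-- The dual hyperteam `𝕏~`: the set of images of all choice functions for `𝕏`. -/
def dualH (𝕏 : Hyperteam Var A) : Hyperteam Var A :=
  {Y | ∃ χ : Team Var A → Asg Var A, (∀ X ∈ 𝕏, χ X ∈ X) ∧ Y = χ '' 𝕏}

/-- A hyperteam is proper if it is neither empty nor null. -/
def Proper (𝕏 : Hyperteam Var A) : Prop := 𝕏 ≠ ∅ ∧ ∅ ∉ 𝕏

/-- All assignments in all teams of `𝕏` are defined exactly on `U`. -/
def HyperteamOn (𝕏 : Hyperteam Var A) (U : Set Var) : Prop :=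
  ∀ X ∈ 𝕏, ∀ α ∈ X, dom α = U

/-- `𝕏` is a genuine hyperteam: all its assignments share the same domain. -/
def IsHyperteam (𝕏 : Hyperteam Var A) : Prop := ∃ U : Set Var, HyperteamOn 𝕏 U

/-- `𝕏` is a hyperteam over some superset of `V`. -/
def OverSup (𝕏 : Hyperteam Var A) (V : Set Var) : Prop :=
  ∃ U : Set Var, V ⊆ U ∧ HyperteamOn 𝕏 U

/-- `W`-uniform functions from assignments to values. -/
def FW (W : Set Var) : Set (Asg Var A → A) :=
  {F | ∀ α : Asg Var A, F α = F (restrictA α W)}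

/-- Update of an assignment at a variable. -/
noncomputable def updateA (α : Asg Var A) (x : Var) (a : A) : Asg Var A :=
  fun v => if v = x then some a else α v

/-- Extension of an assignment by a function for a variable. -/
noncomputable def extA (α : Asg Var A) (F : Asg Var A → A) (x : Var) : Asg Var A :=
  updateA α x (F α)

/-- Extension of a team by a function for a variable. -/
noncomputable def extT (X : Team Var A) (F : Asg Var A → A) (x : Var) : Team Var A :=
  (fun α => extA α F x) '' X

/-- Extension of a hyperteam with a variable, `W`-uniformly. -/
noncomputable def extH (W : Set Var) (𝕏 : Hyperteam Var A) (x : Var) : Hyperteam Var A :=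
  {Y | ∃ X ∈ 𝕏, ∃ F ∈ FW W, Y = extT X F x}

/-- Bipartitions of a hyperteam. -/
def Bipartition (𝕏₁ 𝕏₂ 𝕏 : Hyperteam Var A) : Prop :=
  𝕏₁ ∩ 𝕏₂ = ∅ ∧ 𝕏₁ ∪ 𝕏₂ = 𝕏

/-- Cylindrification of a team with respect to a variable. -/
noncomputable def cylT (X : Team Var A) (x : Var) : Team Var A :=
  {β | ∃ α ∈ X, ∃ a : A, β = updateA α x a}

/-- Cylindrification of a hyperteam with respect to a variable. -/
noncomputable def cylH (𝕏 : Hyperteam Var A) (x : Var) : Hyperteam Var A :=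
  (fun X => cylT X x) '' 𝕏

/-- ADIF formulas over variables `Var` and a relational signature. -/
inductive Formula (Var RSym : Type) (ar : RSym → ℕ) : Type
  | fls : Formula Var RSym ar
  | tru : Formula Var RSym ar
  | atom (R : RSym) (xs : Fin (ar R) → Var) : Formula Var RSym ar
  | not (φ : Formula Var RSym ar) : Formula Var RSym ar
  | and (φ ψ : Formula Var RSym ar) : Formula Var RSym ar
  | or (φ ψ : Formula Var RSym ar) : Formula Var RSym ar
  | ex (s : Bool) (W : Finset Var) (x : Var) (φ : Formula Var RSym ar) : Formula Var RSym ar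
  | all (s : Bool) (W : Finset Var) (x : Var) (φ : Formula Var RSym ar) : Formula Var RSym ar

/-- The constraint set `⟦±W⟧`: `W` itself for `+` (`s = true`),
its complement for `−` (`s = false`). -/
def denot (s : Bool) (W : Finset Var) : Set Var :=
  if s then (↑W : Set Var) else (↑W : Set Var)ᶜ

/-- Support variables of an ADIF formula. -/
def supv : Formula Var RSym ar → Set Var
  | .fls => ∅
  | .tru => ∅
  | .atom _ xs => Set.range xs
  | .not φ => supv φ
  | .and φ ψ => supv φ ∪ supv ψ
  | .or φ ψ => supv φ ∪ supv ψ
  | .ex _ _ x φ => supv φ \ {x}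
  | .all _ _ x φ => supv φ \ {x}

/-- Free variables of an ADIF formula. -/
noncomputable def freev : Formula Var RSym ar → Set Var
  | .fls => ∅
  | .tru => ∅
  | .atom _ xs => Set.range xs
  | .not φ => freev φ
  | .and φ ψ => freev φ ∪ freev ψ
  | .or φ ψ => freev φ ∪ freev ψ
  | .ex s W x φ => if x ∈ freev φ then (freev φ \ {x}) ∪ denot s W else freev φ
  | .all s W x φ => if x ∈ freev φ then (freev φ \ {x}) ∪ denot s W else freev φ

/-- Alternation flags. -/
inductive Flag : Type
  | EA : Flag
  | AE : Flag

/-- The dual alternation flag. -/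
def Flag.dual : Flag → Flag
  | .EA => .AE
  | .AE => .EA

/-- Satisfaction of an atom by a (partial) assignment. -/
def atomSat (𝔄 : Struct RSym ar) (R : RSym) (xs : Fin (ar R) → Var)
    (α : Asg Var 𝔄.A) : Prop :=
  ∃ v : Fin (ar R) → 𝔄.A, (∀ i, α (xs i) = some (v i)) ∧ 𝔄.interp R v

/-- Hodges' alternating satisfaction relation `𝔄, 𝕏 ⊨^fl φ` for ADIF. -/
noncomputable def sat (𝔄 : Struct RSym ar) :
    Formula Var RSym ar → Flag → Hyperteam Var 𝔄.A → Prop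
  | .fls, .EA, 𝕏 => ∅ ∈ 𝕏
  | .fls, .AE, 𝕏 => 𝕏 = ∅
  | .tru, .EA, 𝕏 => 𝕏 ≠ ∅
  | .tru, .AE, 𝕏 => ∅ ∉ 𝕏
  | .atom R xs, .EA, 𝕏 => ∃ X ∈ 𝕏, ∀ α ∈ X, atomSat 𝔄 R xs α
  | .atom R xs, .AE, 𝕏 => ∀ X ∈ 𝕏, ∃ α ∈ X, atomSat 𝔄 R xs α
  | .not φ, fl, 𝕏 => ¬ sat 𝔄 φ fl.dual 𝕏
  | .and φ ψ, .EA, 𝕏 =>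
      ∀ 𝕏₁ 𝕏₂, Bipartition 𝕏₁ 𝕏₂ 𝕏 → sat 𝔄 φ .EA 𝕏₁ ∨ sat 𝔄 ψ .EA 𝕏₂
  | .and φ ψ, .AE, 𝕏 =>
      ∀ 𝕏₁ 𝕏₂, Bipartition 𝕏₁ 𝕏₂ (dualH 𝕏) → sat 𝔄 φ .EA 𝕏₁ ∨ sat 𝔄 ψ .EA 𝕏₂
  | .or φ ψ, .AE, 𝕏 =>
      ∃ 𝕏₁ 𝕏₂, Bipartition 𝕏₁ 𝕏₂ 𝕏 ∧ sat 𝔄 φ .AE 𝕏₁ ∧ sat 𝔄 ψ .AE 𝕏₂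
  | .or φ ψ, .EA, 𝕏 =>
      ∃ 𝕏₁ 𝕏₂, Bipartition 𝕏₁ 𝕏₂ (dualH 𝕏) ∧ sat 𝔄 φ .AE 𝕏₁ ∧ sat 𝔄 ψ .AE 𝕏₂
  | .ex s W x φ, .EA, 𝕏 => sat 𝔄 φ .EA (extH (denot s W) 𝕏 x)
  | .ex s W x φ, .AE, 𝕏 => sat 𝔄 φ .EA (extH (denot s W) (dualH 𝕏) x)
  | .all s W x φ, .AE, 𝕏 => sat 𝔄 φ .AE (extH (denot s W) 𝕏 x)
  | .all s W x φ, .EA, 𝕏 => sat 𝔄 φ .AE (extH (denot s W) (dualH 𝕏) x)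

/-- `φ` is `fl`-satisfiable on `𝔄`: some proper hyperteam over `sup φ` satisfies it. -/
noncomputable def SatOn (𝔄 : Struct RSym ar) (fl : Flag) (φ : Formula Var RSym ar) : Prop :=
  ∃ 𝕏 : Hyperteam Var 𝔄.A, HyperteamOn 𝕏 (supv φ) ∧ Proper 𝕏 ∧ sat 𝔄 φ fl 𝕏

/-- `φ` is `fl`-satisfiable: `fl`-satisfiable on some structure. -/
noncomputable def Satisfiable (Var : Type) {RSym : Type} {ar : RSym → ℕ}
    (fl : Flag) (φ : Formula Var RSym ar) : Prop :=
  ∃ 𝔄 : Struct RSym ar, SatOn 𝔄 fl φ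

/-- `φ ⇛^fl ψ`: `fl`-implication between ADIF formulas. -/
noncomputable def ImpliesF (fl : Flag) (φ ψ : Formula Var RSym ar) : Prop :=
  ∀ 𝔄 : Struct RSym ar, ∀ 𝕏 : Hyperteam Var 𝔄.A,
    OverSup 𝕏 (supv φ ∪ supv ψ) → sat 𝔄 φ fl 𝕏 → sat 𝔄 ψ fl 𝕏

/-- `φ ≅^fl ψ`: `fl`-equivalence between ADIF formulas. -/
noncomputable def EquivFlagF (fl : Flag) (φ ψ : Formula Var RSym ar) : Prop :=
  ImpliesF fl φ ψ ∧ ImpliesF fl ψ φ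

/-- `φ ≅ ψ`: equivalence for both alternation flags. -/
noncomputable def EquivF (φ ψ : Formula Var RSym ar) : Prop :=
  ∀ fl : Flag, EquivFlagF fl φ ψ

end ADIF

namespace ADIF

variable {Var RSym : Type} {ar : RSym → ℕ} {A : Type}

/-- A formula is atomic if it is `⊥`, `⊤` or a relational atom. -/
def IsAtomic : Formula Var RSym ar → Prop
  | .fls => True
  | .tru => True
  | .atom _ _ => True
  | _ => False

/-- Negation normal form: negation is applied only to atomic formulas. -/
def IsNNF : Formula Var RSym ar → Prop
  | .fls => True
  | .tru => True
  | .atom _ _ => True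
  | .not φ => IsAtomic φ
  | .and φ ψ => IsNNF φ ∧ IsNNF ψ
  | .or φ ψ => IsNNF φ ∧ IsNNF ψ
  | .ex _ _ _ φ => IsNNF φ
  | .all _ _ _ φ => IsNNF φ

/-- An item `Q^{±W}x` of a quantifier prefix: `q = true` means `∃`,
`q = false` means `∀`; `s = true` means `+W`, `s = false` means `−W`. -/
structure QItem (Var : Type) where
  q : Bool
  s : Bool
  W : Finset Var
  x : Var

/-- The constraint set of a quantifier-prefix item. -/
def QItem.constr (i : QItem Var) : Set Var := denot i.s i.W

/-- Well-formed quantifier prefixes: each variable is quantified at most once,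
does not occur in its own constraint set, and is not quantified in the scope of
a quantifier whose constraint set contains it. -/
def GoodPrefix : List (QItem Var) → Prop
  | [] => True
  | i :: rest =>
      i.x ∉ i.constr ∧ (∀ j ∈ rest, j.x ≠ i.x ∧ j.x ∉ i.constr) ∧ GoodPrefix rest

/-- Prefixing a formula by a quantifier prefix. -/
def applyPrefix : List (QItem Var) → Formula Var RSym ar → Formula Var RSym ar
  | [], φ => φ
  | i :: rest, φ =>
      if i.q then Formula.ex i.s i.W i.x (applyPrefix rest φ)
      else Formula.all i.s i.W i.x (applyPrefix rest φ)

/-- The extension operator `ext^fl(𝕏, Q^{±W}x)` for a single quantifier. -/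
noncomputable def extQ (fl : Flag) (𝕏 : Hyperteam Var A) (i : QItem Var) : Hyperteam Var A :=
  match fl, i.q with
  | .EA, true => extH (denot i.s i.W) 𝕏 i.x
  | .AE, false => extH (denot i.s i.W) 𝕏 i.x
  | .EA, false => dualH (extH (denot i.s i.W) (dualH 𝕏) i.x)
  | .AE, true => dualH (extH (denot i.s i.W) (dualH 𝕏) i.x)

/-- The extension operator `ext^fl(𝕏, ℘)` for a quantifier prefix. -/
noncomputable def extP (fl : Flag) : Hyperteam Var A → List (QItem Var) → Hyperteam Var A
  | 𝕏, [] => 𝕏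
  | 𝕏, i :: rest => extP fl (extQ fl 𝕏 i) rest

/-- Ordinary first-order formulas over the signature. -/
inductive FForm (Var RSym : Type) (ar : RSym → ℕ) : Type
  | fls : FForm Var RSym ar
  | tru : FForm Var RSym ar
  | atom (R : RSym) (xs : Fin (ar R) → Var) : FForm Var RSym ar
  | not (φ : FForm Var RSym ar) : FForm Var RSym ar
  | and (φ ψ : FForm Var RSym ar) : FForm Var RSym ar
  | or (φ ψ : FForm Var RSym ar) : FForm Var RSym ar
  | ex (x : Var) (φ : FForm Var RSym ar) : FForm Var RSym ar
  | all (x : Var) (φ : FForm Var RSym ar) : FForm Var RSym ar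

/-- Free variables of a first-order formula. -/
def folFree : FForm Var RSym ar → Set Var
  | .fls => ∅
  | .tru => ∅
  | .atom _ xs => Set.range xs
  | .not φ => folFree φ
  | .and φ ψ => folFree φ ∪ folFree ψ
  | .or φ ψ => folFree φ ∪ folFree ψ
  | .ex x φ => folFree φ \ {x}
  | .all x φ => folFree φ \ {x}

/-- Standard Tarskian satisfaction `𝔄, α ⊨_FOL φ` for first-order formulas. -/
noncomputable def folSat (𝔄 : Struct RSym ar) : FForm Var RSym ar → Asg Var 𝔄.A → Prop
  | .fls, _ => False
  | .tru, _ => True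
  | .atom R xs, α => atomSat 𝔄 R xs α
  | .not φ, α => ¬ folSat 𝔄 φ α
  | .and φ ψ, α => folSat 𝔄 φ α ∧ folSat 𝔄 ψ α
  | .or φ ψ, α => folSat 𝔄 φ α ∨ folSat 𝔄 ψ α
  | .ex x φ, α => ∃ a : 𝔄.A, folSat 𝔄 φ (updateA α x a)
  | .all x φ, α => ∀ a : 𝔄.A, folSat 𝔄 φ (updateA α x a)

/-- The FOL fragment of ADIF: every quantifier is `Q^{+W}x` with
`W = sup(φ) ∖ {x}`. -/
def IsFOLFrag : Formula Var RSym ar → Prop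
  | .fls => True
  | .tru => True
  | .atom _ _ => True
  | .not φ => IsFOLFrag φ
  | .and φ ψ => IsFOLFrag φ ∧ IsFOLFrag ψ
  | .or φ ψ => IsFOLFrag φ ∧ IsFOLFrag ψ
  | .ex s W x φ => s = true ∧ (↑W : Set Var) = supv φ \ {x} ∧ IsFOLFrag φ
  | .all s W x φ => s = true ∧ (↑W : Set Var) = supv φ \ {x} ∧ IsFOLFrag φ

/-- Tarskian satisfaction of an ADIF formula (in the FOL fragment) by an
assignment, quantifier decorations being ignored. -/
noncomputable def tarskiSat (𝔄 : Struct RSym ar) : Formula Var RSym ar → Asg Var 𝔄.A → Prop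
  | .fls, _ => False
  | .tru, _ => True
  | .atom R xs, α => atomSat 𝔄 R xs α
  | .not φ, α => ¬ tarskiSat 𝔄 φ α
  | .and φ ψ, α => tarskiSat 𝔄 φ α ∧ tarskiSat 𝔄 ψ α
  | .or φ ψ, α => tarskiSat 𝔄 φ α ∨ tarskiSat 𝔄 ψ α
  | .ex _ _ x φ, α => ∃ a : 𝔄.A, tarskiSat 𝔄 φ (updateA α x a)
  | .all _ _ x φ, α => ∀ a : 𝔄.A, tarskiSat 𝔄 φ (updateA α x a)

end ADIF

/-! Whenever `𝕏₁ ⊑_{free φ} 𝕏₂`, `∃∀`-satisfaction of `φ` passes from `𝕏₁` to `𝕏₂` and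
`∀∃`-satisfaction from `𝕏₂` to `𝕏₁`; applying this in both directions of `≡_{free φ}` gives
the theorem. The induction goes through because dualization reverses `⊑`
(choice functions can be transported backwards), bipartitions can be pulled back along `⊑`,
and extension by a `W`-uniform function preserves `⊑` once `W` is among the free variables. -/

namespace ADIF

variable {Var RSym : Type} {ar : RSym → ℕ} {A : Type}

lemma inclW_iff {W : Set Var} {𝕏₁ 𝕏₂ : Hyperteam Var A} :
    inclW W 𝕏₁ 𝕏₂ ↔ ∀ X₁ ∈ 𝕏₁, ∃ X₂ ∈ 𝕏₂, restrictT X₂ W ⊆ restrictT X₁ W := by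
  simp only [inclW, incl, restrictH, Set.forall_mem_image, Set.exists_mem_image]

lemma restrictA_restrictA {V W : Set Var} (hVW : V ⊆ W) (α : Asg Var A) :
    restrictA (restrictA α W) V = restrictA α V := by
  funext v
  by_cases hv : v ∈ V
  · simp [restrictA, hv, hVW hv]
  · simp [restrictA, hv]

lemma apply_eq_of_restrictA_eq {W : Set Var} {α β : Asg Var A}
    (h : restrictA α W = restrictA β W) {v : Var} (hv : v ∈ W) : α v = β v := by
  simpa [restrictA, hv] using congrFun h v

lemma restrictT_restrictT {V W : Set Var} (hVW : V ⊆ W) (X : Team Var A) :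
    restrictT (restrictT X W) V = restrictT X V := by
  simp only [restrictT, Set.image_image, restrictA_restrictA hVW]

lemma restrictT_subset_restrictT_empty_iff {W : Set Var} {X : Team Var A} :
    restrictT X W ⊆ restrictT ∅ W ↔ X = ∅ := by
  simp [restrictT]

lemma inclW_anti {V W : Set Var} (hVW : V ⊆ W) {𝕏₁ 𝕏₂ : Hyperteam Var A}
    (h : inclW W 𝕏₁ 𝕏₂) : inclW V 𝕏₁ 𝕏₂ := by
  rw [inclW_iff] at h ⊢
  intro X₁ hX₁
  obtain ⟨X₂, hX₂, hsub⟩ := h X₁ hX₁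
  refine ⟨X₂, hX₂, ?_⟩
  rw [← restrictT_restrictT hVW X₁, ← restrictT_restrictT hVW X₂]
  exact Set.image_mono hsub

lemma inclW_dualH {W : Set Var} {𝕏₁ 𝕏₂ : Hyperteam Var A}
    (h : inclW W 𝕏₁ 𝕏₂) : inclW W (dualH 𝕏₂) (dualH 𝕏₁) := by
  rw [inclW_iff] at h ⊢
  rintro _ ⟨χ₂, hχ₂, rfl⟩
  have lift : ∀ X ∈ 𝕏₁, ∃ β ∈ X, ∃ X₂ ∈ 𝕏₂, restrictA β W = restrictA (χ₂ X₂) W := by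
    intro X hX
    obtain ⟨X₂, hX₂, hsub⟩ := h X hX
    obtain ⟨β, hβ, hr⟩ := hsub ⟨χ₂ X₂, hχ₂ X₂ hX₂, rfl⟩
    exact ⟨β, hβ, X₂, hX₂, hr⟩
  choose! χ₁ hχ₁ X₂ hX₂ hr using lift
  refine ⟨χ₁ '' 𝕏₁, ⟨χ₁, hχ₁, rfl⟩, ?_⟩
  rintro _ ⟨_, ⟨X, hX, rfl⟩, rfl⟩
  exact ⟨χ₂ (X₂ X), ⟨X₂ X, hX₂ X hX, rfl⟩, (hr X hX).symm⟩

lemma inclW_extH {W U V : Set Var} {x : Var} {𝕏₁ 𝕏₂ : Hyperteam Var A}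
    (hV : V \ {x} ⊆ U) (hW : x ∈ V → W ⊆ U) (h : inclW U 𝕏₁ 𝕏₂) :
    inclW V (extH W 𝕏₁ x) (extH W 𝕏₂ x) := by
  rw [inclW_iff] at h ⊢
  rintro _ ⟨X₁, hX₁, F, hF, rfl⟩
  obtain ⟨X₂, hX₂, hsub⟩ := h X₁ hX₁
  refine ⟨extT X₂ F x, ⟨X₂, hX₂, F, hF, rfl⟩, ?_⟩
  rintro _ ⟨_, ⟨α, hα, rfl⟩, rfl⟩
  obtain ⟨β, hβ, hr⟩ := hsub ⟨α, hα, rfl⟩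
  simp only at hr
  refine ⟨extA β F x, ⟨β, hβ, rfl⟩, funext fun v => ?_⟩
  by_cases hv : v ∈ V
  · by_cases hvx : v = x
    · subst hvx
      -- `F` only sees the variables in `W ⊆ U`, where `α` and `β` agree
      have hFeq : F β = F α := by
        rw [hF α, hF β, ← restrictA_restrictA (hW hv) α, ← restrictA_restrictA (hW hv) β, hr]
      simp [restrictA, extA, updateA, hv, hFeq]
    · simp [restrictA, extA, updateA, hv, hvx, apply_eq_of_restrictA_eq hr (hV ⟨hv, hvx⟩)]
  · simp [restrictA, hv]

lemma inclW_extH_freev {U : Set Var} {s : Bool} {W : Finset Var} {x : Var}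
    {𝕏₁ 𝕏₂ : Hyperteam Var A}
    (h : inclW (if x ∈ U then (U \ {x}) ∪ denot s W else U) 𝕏₁ 𝕏₂) :
    inclW U (extH (denot s W) 𝕏₁ x) (extH (denot s W) 𝕏₂ x) := by
  refine inclW_extH ?_ (fun hx => ?_) h
  · split_ifs
    · exact Set.subset_union_left
    · exact Set.sdiff_subset
  · simp only [hx, if_true, Set.subset_union_right]

lemma exists_bipartition_of_inclW {V : Set Var} {𝕏₁ 𝕏₂ 𝕐₁ 𝕐₂ : Hyperteam Var A}
    (h : inclW V 𝕏₁ 𝕏₂) (hbip : Bipartition 𝕐₁ 𝕐₂ 𝕏₂) :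
    ∃ ℤ₁ ℤ₂ : Hyperteam Var A, Bipartition ℤ₁ ℤ₂ 𝕏₁ ∧ inclW V ℤ₁ 𝕐₁ ∧ inclW V ℤ₂ 𝕐₂ := by
  rw [inclW_iff] at h
  choose! g hg hsub using h
  obtain ⟨-, hunion⟩ := hbip
  refine ⟨{X ∈ 𝕏₁ | g X ∈ 𝕐₁}, {X ∈ 𝕏₁ | g X ∉ 𝕐₁}, ⟨?_, ?_⟩, ?_, ?_⟩
  · ext X
    simp only [Set.mem_inter_iff, Set.mem_ofPred_eq, Set.mem_empty_iff_false]
    tauto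
  · ext X
    simp only [Set.mem_union, Set.mem_ofPred_eq]
    tauto
  · rw [inclW_iff]
    rintro X ⟨hX, hgX⟩
    exact ⟨g X, hgX, hsub X hX⟩
  · rw [inclW_iff]
    rintro X ⟨hX, hgX⟩
    have hg𝕐 : g X ∈ 𝕐₁ ∪ 𝕐₂ := hunion ▸ hg X hX
    exact ⟨g X, hg𝕐.resolve_left hgX, hsub X hX⟩

lemma atomSat_congr {𝔄 : Struct RSym ar} {R : RSym} {xs : Fin (ar R) → Var}
    {α β : Asg Var 𝔄.A} (h : restrictA α (Set.range xs) = restrictA β (Set.range xs)) :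
    atomSat 𝔄 R xs α ↔ atomSat 𝔄 R xs β := by
  have hxs : ∀ i, α (xs i) = β (xs i) := fun i => apply_eq_of_restrictA_eq h ⟨i, rfl⟩
  simp only [atomSat, hxs]

def SatMonotone (𝔄 : Struct RSym ar) (φ : Formula Var RSym ar) : Prop :=
  ∀ ⦃𝕏₁ 𝕏₂ : Hyperteam Var 𝔄.A⦄, inclW (freev φ) 𝕏₁ 𝕏₂ →
    (sat 𝔄 φ .EA 𝕏₁ → sat 𝔄 φ .EA 𝕏₂) ∧ (sat 𝔄 φ .AE 𝕏₂ → sat 𝔄 φ .AE 𝕏₁)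

section

variable {𝔄 : Struct RSym ar}

lemma satMonotone_fls : SatMonotone 𝔄 (.fls : Formula Var RSym ar) := by
  intro 𝕏₁ 𝕏₂ h
  rw [inclW_iff] at h
  refine ⟨fun h₁ => ?_, fun h₂ => ?_⟩
  · obtain ⟨X₂, hX₂, hsub⟩ := h ∅ h₁
    rwa [restrictT_subset_restrictT_empty_iff.mp hsub] at hX₂
  · refine Set.eq_empty_of_forall_notMem fun X hX => ?_
    obtain ⟨X₂, hX₂, -⟩ := h X hX
    exact Set.eq_empty_iff_forall_notMem.mp h₂ X₂ hX₂

lemma satMonotone_tru : SatMonotone 𝔄 (.tru : Formula Var RSym ar) := by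
  intro 𝕏₁ 𝕏₂ h
  rw [inclW_iff] at h
  refine ⟨fun h₁ => ?_, fun h₂ h₁ => ?_⟩
  · obtain ⟨X, hX⟩ := Set.nonempty_iff_ne_empty.mpr h₁
    obtain ⟨X₂, hX₂, -⟩ := h X hX
    exact Set.nonempty_iff_ne_empty.mp ⟨X₂, hX₂⟩
  · obtain ⟨X₂, hX₂, hsub⟩ := h ∅ h₁
    exact h₂ (restrictT_subset_restrictT_empty_iff.mp hsub ▸ hX₂)

lemma satMonotone_atom (R : RSym) (xs : Fin (ar R) → Var) :
    SatMonotone 𝔄 (.atom R xs : Formula Var RSym ar) := by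
  intro 𝕏₁ 𝕏₂ h
  rw [inclW_iff] at h
  refine ⟨fun ⟨X₁, hX₁, hsat⟩ => ?_, fun hsat X₁ hX₁ => ?_⟩
  · obtain ⟨X₂, hX₂, hsub⟩ := h X₁ hX₁
    refine ⟨X₂, hX₂, fun α hα => ?_⟩
    obtain ⟨β, hβ, hr⟩ := hsub ⟨α, hα, rfl⟩
    exact (atomSat_congr hr).mp (hsat β hβ)
  · obtain ⟨X₂, hX₂, hsub⟩ := h X₁ hX₁
    obtain ⟨α, hα, hαsat⟩ := hsat X₂ hX₂
    obtain ⟨β, hβ, hr⟩ := hsub ⟨α, hα, rfl⟩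
    exact ⟨β, hβ, (atomSat_congr hr).mpr hαsat⟩

lemma SatMonotone.not {φ : Formula Var RSym ar} (hφ : SatMonotone 𝔄 φ) :
    SatMonotone 𝔄 (.not φ) :=
  fun _ _ h => ⟨mt (hφ h).2, mt (hφ h).1⟩

lemma SatMonotone.and {φ ψ : Formula Var RSym ar} (hφ : SatMonotone 𝔄 φ)
    (hψ : SatMonotone 𝔄 ψ) : SatMonotone 𝔄 (.and φ ψ) := by
  have key : ∀ ⦃𝔸 𝔹 : Hyperteam Var 𝔄.A⦄, inclW (freev φ ∪ freev ψ) 𝔸 𝔹 →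
      (∀ 𝕐₁ 𝕐₂, Bipartition 𝕐₁ 𝕐₂ 𝔸 → sat 𝔄 φ .EA 𝕐₁ ∨ sat 𝔄 ψ .EA 𝕐₂) →
      ∀ 𝕐₁ 𝕐₂, Bipartition 𝕐₁ 𝕐₂ 𝔹 → sat 𝔄 φ .EA 𝕐₁ ∨ sat 𝔄 ψ .EA 𝕐₂ := by
    intro 𝔸 𝔹 h hsat 𝕐₁ 𝕐₂ hbip
    obtain ⟨ℤ₁, ℤ₂, hbip', h₁, h₂⟩ := exists_bipartition_of_inclW h hbip
    exact (hsat ℤ₁ ℤ₂ hbip').imp (hφ (inclW_anti Set.subset_union_left h₁)).1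
      (hψ (inclW_anti Set.subset_union_right h₂)).1
  exact fun _ _ h => ⟨key h, key (inclW_dualH h)⟩

lemma SatMonotone.or {φ ψ : Formula Var RSym ar} (hφ : SatMonotone 𝔄 φ)
    (hψ : SatMonotone 𝔄 ψ) : SatMonotone 𝔄 (.or φ ψ) := by
  have key : ∀ ⦃𝔸 𝔹 : Hyperteam Var 𝔄.A⦄, inclW (freev φ ∪ freev ψ) 𝔸 𝔹 →
      (∃ 𝕐₁ 𝕐₂, Bipartition 𝕐₁ 𝕐₂ 𝔹 ∧ sat 𝔄 φ .AE 𝕐₁ ∧ sat 𝔄 ψ .AE 𝕐₂) →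
      ∃ 𝕐₁ 𝕐₂, Bipartition 𝕐₁ 𝕐₂ 𝔸 ∧ sat 𝔄 φ .AE 𝕐₁ ∧ sat 𝔄 ψ .AE 𝕐₂ := by
    rintro 𝔸 𝔹 h ⟨𝕐₁, 𝕐₂, hbip, hsat₁, hsat₂⟩
    obtain ⟨ℤ₁, ℤ₂, hbip', h₁, h₂⟩ := exists_bipartition_of_inclW h hbip
    exact ⟨ℤ₁, ℤ₂, hbip', (hφ (inclW_anti Set.subset_union_left h₁)).2 hsat₁,
      (hψ (inclW_anti Set.subset_union_right h₂)).2 hsat₂⟩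
  exact fun _ _ h => ⟨key (inclW_dualH h), key h⟩

lemma SatMonotone.ex {φ : Formula Var RSym ar} (s : Bool) (W : Finset Var) (x : Var)
    (hφ : SatMonotone 𝔄 φ) : SatMonotone 𝔄 (.ex s W x φ) :=
  fun _ _ h => ⟨(hφ (inclW_extH_freev h)).1, (hφ (inclW_extH_freev (inclW_dualH h))).1⟩

lemma SatMonotone.all {φ : Formula Var RSym ar} (s : Bool) (W : Finset Var) (x : Var)
    (hφ : SatMonotone 𝔄 φ) : SatMonotone 𝔄 (.all s W x φ) :=
  fun _ _ h => ⟨(hφ (inclW_extH_freev (inclW_dualH h))).2, (hφ (inclW_extH_freev h)).2⟩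

end

theorem satMonotone (𝔄 : Struct RSym ar) (φ : Formula Var RSym ar) : SatMonotone 𝔄 φ := by
  induction φ with
  | fls => exact satMonotone_fls
  | tru => exact satMonotone_tru
  | atom R xs => exact satMonotone_atom R xs
  | not φ hφ => exact hφ.not
  | and φ ψ hφ hψ => exact hφ.and hψ
  | or φ ψ hφ hψ => exact hφ.or hψ
  | ex s W x φ hφ => exact hφ.ex s W x
  | all s W x φ hφ => exact hφ.all s W x

theorem hyperteam_equivalence_general {Var RSym : Type} {ar : RSym → ℕ}
    (𝔄 : Struct RSym ar) (φ : Formula Var RSym ar)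
    (𝕏 𝕏' : Hyperteam Var 𝔄.A)
    (heqv : equivW (freev φ) 𝕏 𝕏') :
    ∀ fl : Flag, (sat 𝔄 φ fl 𝕏 ↔ sat 𝔄 φ fl 𝕏') := by
  have hφ := satMonotone 𝔄 φ
  rintro (_ | _)
  · exact ⟨(hφ heqv.1).1, (hφ heqv.2).1⟩
  · exact ⟨(hφ heqv.2).2, (hφ heqv.1).2⟩

/-- Hyperteam Equivalence. -/
theorem hyperteam_equivalence {Var RSym : Type} {ar : RSym → ℕ}
    (𝔄 : Struct RSym ar) (φ : Formula Var RSym ar)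
    (𝕏 𝕏' : Hyperteam Var 𝔄.A)
    (h𝕏 : OverSup 𝕏 (supv φ)) (h𝕏' : OverSup 𝕏' (supv φ))
    (heqv : equivW (freev φ) 𝕏 𝕏') :
    ∀ fl : Flag, (sat 𝔄 φ fl 𝕏 ↔ sat 𝔄 φ fl 𝕏') :=
  hyperteam_equivalence_general 𝔄 φ 𝕏 𝕏' heqv

end ADIF
end

section
/- (Interpretation Invariance) For all ADIF formulas φ and ψ: φ is ∃∀-satisfiable iff φ is ∀∃-satisfiable; φ ⇛^{∃∀} ψ iff φ ⇛^{∀∃} ψ; and φ ≅^{∃∀} ψ iff φ ≅^{∀∃} ψ. -/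
open scoped Classical

namespace ADIF

section Aux

variable {Var RSym : Type} {ar : RSym → ℕ} {A : Type}

lemma exists_choice {𝕏 : Hyperteam Var A} (h : ∅ ∉ 𝕏) :
    ∃ χ : Team Var A → Asg Var A, ∀ X ∈ 𝕏, χ X ∈ X := by
  refine ⟨fun X => if hX : X.Nonempty then hX.choose else emptyAsg Var A, ?_⟩
  intro X hX
  have hne : X.Nonempty := Set.nonempty_iff_ne_empty.mpr fun he => h (he ▸ hX)
  simp only [dif_pos hne]
  exact hne.choose_spec

lemma empty_mem_dualH {𝕏 : Hyperteam Var A} : ∅ ∈ dualH 𝕏 ↔ 𝕏 = ∅ := by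
  constructor
  · rintro ⟨χ, hχ, hY⟩
    by_contra hne
    obtain ⟨X, hX⟩ := Set.nonempty_iff_ne_empty.mpr hne
    have : χ X ∈ (∅ : Team Var A) := hY ▸ ⟨X, hX, rfl⟩
    exact this.elim
  · rintro rfl
    exact ⟨fun _ => emptyAsg Var A, by simp, by simp⟩

lemma dualH_eq_empty {𝕏 : Hyperteam Var A} : dualH 𝕏 = ∅ ↔ ∅ ∈ 𝕏 := by
  constructor
  · intro h
    by_contra hni
    obtain ⟨χ, hχ⟩ := exists_choice hni
    have : χ '' 𝕏 ∈ dualH 𝕏 := ⟨χ, hχ, rfl⟩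
    rw [h] at this
    exact this.elim
  · intro h
    ext Y
    simp only [Set.mem_empty_iff_false, iff_false]
    rintro ⟨χ, hχ, rfl⟩
    exact (hχ ∅ h).elim

lemma incl_refl (𝕏 : Hyperteam Var A) : incl 𝕏 𝕏 :=
  fun X hX => ⟨X, hX, subset_rfl⟩

lemma dualH_antitone {𝕏 𝕐 : Hyperteam Var A} (h : incl 𝕏 𝕐) :
    incl (dualH 𝕐) (dualH 𝕏) := by
  rintro Y' ⟨χ, hχ, rfl⟩
  classical
  have hsel : ∀ X : Team Var A, X ∈ 𝕏 → ∃ Y, Y ∈ 𝕐 ∧ Y ⊆ X := by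
    intro X hX; obtain ⟨Y, hY, hs⟩ := h X hX; exact ⟨Y, hY, hs⟩
  refine ⟨(fun X => χ (if hX : X ∈ 𝕏 then (hsel X hX).choose else X)) '' 𝕏,
    ⟨fun X => χ (if hX : X ∈ 𝕏 then (hsel X hX).choose else X), ?_, rfl⟩, ?_⟩
  · intro X hX
    have hspec := (hsel X hX).choose_spec
    simp only [dif_pos hX]
    exact hspec.2 (hχ _ hspec.1)
  · rintro β ⟨X, hX, rfl⟩
    have hspec := (hsel X hX).choose_spec
    simp only [dif_pos hX]
    exact ⟨_, hspec.1, rfl⟩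

lemma extH_mono {W : Set Var} {𝕏 𝕐 : Hyperteam Var A} {x : Var} (h : incl 𝕏 𝕐) :
    incl (extH W 𝕏 x) (extH W 𝕐 x) := by
  rintro Z ⟨X, hX, F, hF, rfl⟩
  obtain ⟨Y, hY, hs⟩ := h X hX
  exact ⟨extT Y F x, ⟨Y, hY, F, hF, rfl⟩, Set.image_mono hs⟩

lemma incl_dd_self (𝕏 : Hyperteam Var A) : incl 𝕏 (dualH (dualH 𝕏)) := by
  intro X hX
  classical
  have hsel : ∀ Y : Team Var A, Y ∈ dualH 𝕏 → ∃ α, α ∈ Y ∧ α ∈ X := by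
    rintro Y ⟨χ, hχ, rfl⟩
    exact ⟨χ X, ⟨X, hX, rfl⟩, hχ X hX⟩
  refine ⟨(fun Y => if hY : Y ∈ dualH 𝕏 then (hsel Y hY).choose else emptyAsg Var A) ''
      dualH 𝕏,
    ⟨fun Y => if hY : Y ∈ dualH 𝕏 then (hsel Y hY).choose else emptyAsg Var A, ?_, rfl⟩, ?_⟩
  · intro Y hY
    simp only [dif_pos hY]
    exact (hsel Y hY).choose_spec.1
  · rintro β ⟨Y, hY, rfl⟩
    simp only [dif_pos hY]
    exact (hsel Y hY).choose_spec.2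

lemma dd_incl_self (𝕏 : Hyperteam Var A) : incl (dualH (dualH 𝕏)) 𝕏 := by
  rintro Z ⟨ξ, hξ, rfl⟩
  by_contra hcon
  push_neg at hcon
  classical
  have hsel : ∀ X : Team Var A, X ∈ 𝕏 → ∃ α, α ∈ X ∧ α ∉ ξ '' dualH 𝕏 := by
    intro X hX
    obtain ⟨α, hα, hns⟩ := Set.not_subset.mp (hcon X hX)
    exact ⟨α, hα, hns⟩
  have hYmem : (fun X => if hX : X ∈ 𝕏 then (hsel X hX).choose else emptyAsg Var A) '' 𝕏
      ∈ dualH 𝕏 := by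
    refine ⟨_, ?_, rfl⟩
    intro X hX
    simp only [dif_pos hX]
    exact (hsel X hX).choose_spec.1
  have h1 := hξ _ hYmem
  obtain ⟨X₀, hX₀, heq⟩ := h1
  have h2 : ξ ((fun X => if hX : X ∈ 𝕏 then (hsel X hX).choose else emptyAsg Var A) '' 𝕏)
      ∈ ξ '' dualH 𝕏 := ⟨_, hYmem, rfl⟩
  rw [← heq] at h2
  simp only [dif_pos hX₀] at h2
  exact (hsel X₀ hX₀).choose_spec.2 h2

lemma bipart_transfer {𝕏 𝕐 𝕐₁ 𝕐₂ : Hyperteam Var A} (h : incl 𝕏 𝕐)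
    (hb : Bipartition 𝕐₁ 𝕐₂ 𝕐) :
    ∃ 𝕏₁ 𝕏₂, Bipartition 𝕏₁ 𝕏₂ 𝕏 ∧ incl 𝕏₁ 𝕐₁ ∧ incl 𝕏₂ 𝕐₂ := by
  refine ⟨{X | X ∈ 𝕏 ∧ ∃ Y ∈ 𝕐₁, Y ⊆ X}, {X | X ∈ 𝕏 ∧ ¬ ∃ Y ∈ 𝕐₁, Y ⊆ X},
    ⟨?_, ?_⟩, ?_, ?_⟩
  · ext X
    simp only [Set.mem_inter_iff, Set.mem_setOf_eq, Set.mem_empty_iff_false, iff_false]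
    rintro ⟨⟨_, hE⟩, _, hnE⟩
    exact hnE hE
  · ext X
    simp only [Set.mem_union, Set.mem_setOf_eq]
    constructor
    · rintro (⟨hX, _⟩ | ⟨hX, _⟩) <;> exact hX
    · intro hX
      by_cases hE : ∃ Y ∈ 𝕐₁, Y ⊆ X
      · exact Or.inl ⟨hX, hE⟩
      · exact Or.inr ⟨hX, hE⟩
  · rintro X ⟨_, Y, hY, hs⟩
    exact ⟨Y, hY, hs⟩
  · rintro X ⟨hX, hn⟩
    obtain ⟨Y, hY, hs⟩ := h X hX
    rw [← hb.2] at hY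
    rcases hY with hY | hY
    · exact absurd ⟨Y, hY, hs⟩ hn
    · exact ⟨Y, hY, hs⟩

lemma atom_dual_a {𝕏 : Hyperteam Var A} (P : Asg Var A → Prop) :
    (∃ X ∈ 𝕏, ∀ α ∈ X, P α) ↔ (∀ Y ∈ dualH 𝕏, ∃ α ∈ Y, P α) := by
  constructor
  · rintro ⟨X, hX, hP⟩ Y ⟨χ, hχ, rfl⟩
    exact ⟨χ X, ⟨X, hX, rfl⟩, hP _ (hχ X hX)⟩
  · intro h
    by_contra hn
    push_neg at hn
    classical
    have hsel : ∀ X : Team Var A, X ∈ 𝕏 → ∃ α, α ∈ X ∧ ¬ P α := by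
      intro X hX
      obtain ⟨α, hα, hPα⟩ := hn X hX
      exact ⟨α, hα, hPα⟩
    have hYmem : (fun X => if hX : X ∈ 𝕏 then (hsel X hX).choose else emptyAsg Var A) '' 𝕏
        ∈ dualH 𝕏 := by
      refine ⟨_, ?_, rfl⟩
      intro X hX
      simp only [dif_pos hX]
      exact (hsel X hX).choose_spec.1
    obtain ⟨α, ⟨X₀, hX₀, heq⟩, hPα⟩ := h _ hYmem
    rw [← heq] at hPα
    simp only [dif_pos hX₀] at hPα
    exact (hsel X₀ hX₀).choose_spec.2 hPα

lemma atom_dual_b {𝕏 : Hyperteam Var A} (P : Asg Var A → Prop) :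
    (∀ X ∈ 𝕏, ∃ α ∈ X, P α) ↔ (∃ Y ∈ dualH 𝕏, ∀ α ∈ Y, P α) := by
  constructor
  · intro h
    classical
    have hsel : ∀ X : Team Var A, X ∈ 𝕏 → ∃ α, α ∈ X ∧ P α := by
      intro X hX
      obtain ⟨α, hα, hPα⟩ := h X hX
      exact ⟨α, hα, hPα⟩
    refine ⟨(fun X => if hX : X ∈ 𝕏 then (hsel X hX).choose else emptyAsg Var A) '' 𝕏,
      ⟨_, ?_, rfl⟩, ?_⟩
    · intro X hX
      simp only [dif_pos hX]
      exact (hsel X hX).choose_spec.1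
    · rintro α ⟨X, hX, rfl⟩
      simp only [dif_pos hX]
      exact (hsel X hX).choose_spec.2
  · rintro ⟨Y, ⟨χ, hχ, rfl⟩, hP⟩ X hX
    exact ⟨χ X, hχ X hX, hP _ ⟨X, hX, rfl⟩⟩

lemma sat_mono (𝔄 : Struct RSym ar) (φ : Formula Var RSym ar) :
    ∀ 𝕏 𝕐 : Hyperteam Var 𝔄.A, incl 𝕏 𝕐 →
      (sat 𝔄 φ .EA 𝕏 → sat 𝔄 φ .EA 𝕐) ∧ (sat 𝔄 φ .AE 𝕐 → sat 𝔄 φ .AE 𝕏) := by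
  induction φ with
  | fls =>
    intro 𝕏 𝕐 h
    constructor
    · intro hs
      obtain ⟨Y, hY, hsub⟩ := h ∅ hs
      have : Y = ∅ := Set.subset_empty_iff.mp hsub
      simpa [sat, this] using hY
    · intro hs
      simp only [sat] at hs ⊢
      ext X
      simp only [Set.mem_empty_iff_false, iff_false]
      intro hX
      obtain ⟨Y, hY, _⟩ := h X hX
      rw [hs] at hY
      exact hY
  | tru =>
    intro 𝕏 𝕐 h
    constructor
    · intro hs
      simp only [sat] at hs ⊢
      obtain ⟨X, hX⟩ := Set.nonempty_iff_ne_empty.mpr hs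
      obtain ⟨Y, hY, _⟩ := h X hX
      exact Set.nonempty_iff_ne_empty.mp ⟨Y, hY⟩
    · intro hs
      simp only [sat] at hs ⊢
      intro hX
      obtain ⟨Y, hY, hsub⟩ := h ∅ hX
      have : Y = ∅ := Set.subset_empty_iff.mp hsub
      exact hs (this ▸ hY)
  | atom R xs =>
    intro 𝕏 𝕐 h
    constructor
    · rintro ⟨X, hX, hall⟩
      obtain ⟨Y, hY, hsub⟩ := h X hX
      exact ⟨Y, hY, fun α hα => hall α (hsub hα)⟩
    · intro hs X hX
      obtain ⟨Y, hY, hsub⟩ := h X hX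
      obtain ⟨α, hα, hP⟩ := hs Y hY
      exact ⟨α, hsub hα, hP⟩
  | not φ ih =>
    intro 𝕏 𝕐 h
    constructor
    · intro hs
      simp only [sat, Flag.dual] at hs ⊢
      exact fun hc => hs ((ih 𝕏 𝕐 h).2 hc)
    · intro hs
      simp only [sat, Flag.dual] at hs ⊢
      exact fun hc => hs ((ih 𝕏 𝕐 h).1 hc)
  | and φ ψ ihφ ihψ =>
    intro 𝕏 𝕐 h
    constructor
    · intro hs 𝕐₁ 𝕐₂ hb
      obtain ⟨𝕏₁, 𝕏₂, hb', h1, h2⟩ := bipart_transfer h hb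
      rcases hs 𝕏₁ 𝕏₂ hb' with hc | hc
      · exact Or.inl ((ihφ 𝕏₁ 𝕐₁ h1).1 hc)
      · exact Or.inr ((ihψ 𝕏₂ 𝕐₂ h2).1 hc)
    · intro hs 𝕏₁ 𝕏₂ hb
      obtain ⟨𝕐₁, 𝕐₂, hb', h1, h2⟩ := bipart_transfer (dualH_antitone h) hb
      rcases hs 𝕐₁ 𝕐₂ hb' with hc | hc
      · exact Or.inl ((ihφ 𝕐₁ 𝕏₁ h1).1 hc)
      · exact Or.inr ((ihψ 𝕐₂ 𝕏₂ h2).1 hc)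
  | or φ ψ ihφ ihψ =>
    intro 𝕏 𝕐 h
    constructor
    · rintro ⟨𝔸, 𝔹, hb, h1, h2⟩
      obtain ⟨𝔸', 𝔹', hb', ha, hbb⟩ := bipart_transfer (dualH_antitone h) hb
      exact ⟨𝔸', 𝔹', hb', (ihφ 𝔸' 𝔸 ha).2 h1, (ihψ 𝔹' 𝔹 hbb).2 h2⟩
    · rintro ⟨𝕐₁, 𝕐₂, hb, h1, h2⟩
      obtain ⟨𝕏₁, 𝕏₂, hb', ha, hbb⟩ := bipart_transfer h hb
      exact ⟨𝕏₁, 𝕏₂, hb', (ihφ 𝕏₁ 𝕐₁ ha).2 h1, (ihψ 𝕏₂ 𝕐₂ hbb).2 h2⟩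
  | ex s W x φ ih =>
    intro 𝕏 𝕐 h
    constructor
    · exact fun hs =>
        (ih (extH (denot s W) 𝕏 x) (extH (denot s W) 𝕐 x) (extH_mono h)).1 hs
    · exact fun hs =>
        (ih (extH (denot s W) (dualH 𝕐) x) (extH (denot s W) (dualH 𝕏) x)
          (extH_mono (dualH_antitone h))).1 hs
  | all s W x φ ih =>
    intro 𝕏 𝕐 h
    constructor
    · exact fun hs =>
        (ih (extH (denot s W) (dualH 𝕐) x) (extH (denot s W) (dualH 𝕏) x)
          (extH_mono (dualH_antitone h))).2 hs
    · exact fun hs =>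
        (ih (extH (denot s W) 𝕏 x) (extH (denot s W) 𝕐 x) (extH_mono h)).2 hs

lemma sat_congr (𝔄 : Struct RSym ar) (φ : Formula Var RSym ar)
    {𝕏 𝕐 : Hyperteam Var 𝔄.A} (h₁ : incl 𝕏 𝕐) (h₂ : incl 𝕐 𝕏) (fl : Flag) :
    sat 𝔄 φ fl 𝕏 ↔ sat 𝔄 φ fl 𝕐 := by
  cases fl
  · exact ⟨(sat_mono 𝔄 φ 𝕏 𝕐 h₁).1, (sat_mono 𝔄 φ 𝕐 𝕏 h₂).1⟩
  · exact ⟨(sat_mono 𝔄 φ 𝕐 𝕏 h₂).2, (sat_mono 𝔄 φ 𝕏 𝕐 h₁).2⟩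

lemma sat_dd (𝔄 : Struct RSym ar) (φ : Formula Var RSym ar)
    (𝕏 : Hyperteam Var 𝔄.A) (fl : Flag) :
    sat 𝔄 φ fl (dualH (dualH 𝕏)) ↔ sat 𝔄 φ fl 𝕏 :=
  sat_congr 𝔄 φ (dd_incl_self 𝕏) (incl_dd_self 𝕏) fl

lemma sat_dual (𝔄 : Struct RSym ar) (φ : Formula Var RSym ar) :
    ∀ 𝕏 : Hyperteam Var 𝔄.A,
      (sat 𝔄 φ .EA 𝕏 ↔ sat 𝔄 φ .AE (dualH 𝕏)) ∧
      (sat 𝔄 φ .AE 𝕏 ↔ sat 𝔄 φ .EA (dualH 𝕏)) := by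
  induction φ with
  | fls =>
    intro 𝕏
    constructor
    · simpa [sat] using dualH_eq_empty.symm
    · simpa [sat] using empty_mem_dualH.symm
  | tru =>
    intro 𝕏
    constructor
    · simp only [sat]
      exact not_congr empty_mem_dualH.symm |>.symm |>.symm
    · simp only [sat]
      exact not_congr dualH_eq_empty.symm |>.symm |>.symm
  | atom R xs =>
    intro 𝕏
    exact ⟨atom_dual_a _, atom_dual_b _⟩
  | not φ ih =>
    intro 𝕏
    constructor
    · simp only [sat, Flag.dual]
      exact not_congr (ih 𝕏).2
    · simp only [sat, Flag.dual]
      exact not_congr (ih 𝕏).1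
  | and φ ψ ihφ ihψ =>
    intro 𝕏
    constructor
    · have h1 : sat 𝔄 (Formula.and φ ψ) .AE (dualH 𝕏) ↔
          sat 𝔄 (Formula.and φ ψ) .EA (dualH (dualH 𝕏)) := Iff.rfl
      rw [h1, sat_dd]
    · exact Iff.rfl
  | or φ ψ ihφ ihψ =>
    intro 𝕏
    constructor
    · exact Iff.rfl
    · have h1 : sat 𝔄 (Formula.or φ ψ) .EA (dualH 𝕏) ↔
          sat 𝔄 (Formula.or φ ψ) .AE (dualH (dualH 𝕏)) := Iff.rfl
      rw [h1, sat_dd]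
  | ex s W x φ ih =>
    intro 𝕏
    constructor
    · have h1 : sat 𝔄 (Formula.ex s W x φ) .AE (dualH 𝕏) ↔
          sat 𝔄 (Formula.ex s W x φ) .EA (dualH (dualH 𝕏)) := Iff.rfl
      rw [h1, sat_dd]
    · exact Iff.rfl
  | all s W x φ ih =>
    intro 𝕏
    constructor
    · exact Iff.rfl
    · have h1 : sat 𝔄 (Formula.all s W x φ) .EA (dualH 𝕏) ↔
          sat 𝔄 (Formula.all s W x φ) .AE (dualH (dualH 𝕏)) := Iff.rfl
      rw [h1, sat_dd]

lemma hyperteamOn_dualH {𝕏 : Hyperteam Var A} {U : Set Var}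
    (h : HyperteamOn 𝕏 U) : HyperteamOn (dualH 𝕏) U := by
  rintro Y ⟨χ, hχ, rfl⟩ α ⟨X, hX, rfl⟩
  exact h X hX _ (hχ X hX)

lemma proper_dualH {𝕏 : Hyperteam Var A} (h : Proper 𝕏) : Proper (dualH 𝕏) := by
  obtain ⟨hne, hni⟩ := h
  constructor
  · obtain ⟨χ, hχ⟩ := exists_choice hni
    exact Set.nonempty_iff_ne_empty.mp ⟨χ '' 𝕏, χ, hχ, rfl⟩
  · intro hmem
    exact hne (empty_mem_dualH.mp hmem)

lemma overSup_dualH {𝕏 : Hyperteam Var A} {V : Set Var}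
    (h : OverSup 𝕏 V) : OverSup (dualH 𝕏) V := by
  obtain ⟨U, hVU, hOn⟩ := h
  exact ⟨U, hVU, hyperteamOn_dualH hOn⟩

end Aux

/-- Interpretation Invariance. -/
theorem interpretation_invariance {Var RSym : Type} {ar : RSym → ℕ}
    (φ ψ : Formula Var RSym ar) :
    (Satisfiable Var .EA φ ↔ Satisfiable Var .AE φ) ∧
    (ImpliesF .EA φ ψ ↔ ImpliesF .AE φ ψ) ∧
    (EquivFlagF .EA φ ψ ↔ EquivFlagF .AE φ ψ) := by
  have sat_iff : ∀ (χ : Formula Var RSym ar), Satisfiable Var .EA χ ↔ Satisfiable Var .AE χ := by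
    intro χ
    constructor
    · rintro ⟨𝔄, 𝕏, hOn, hP, hs⟩
      exact ⟨𝔄, dualH 𝕏, hyperteamOn_dualH hOn, proper_dualH hP,
        ((sat_dual 𝔄 χ 𝕏).1).mp hs⟩
    · rintro ⟨𝔄, 𝕏, hOn, hP, hs⟩
      exact ⟨𝔄, dualH 𝕏, hyperteamOn_dualH hOn, proper_dualH hP,
        ((sat_dual 𝔄 χ 𝕏).2).mp hs⟩
  have imp_iff : ∀ (χ₁ χ₂ : Formula Var RSym ar),
      ImpliesF .EA χ₁ χ₂ ↔ ImpliesF .AE χ₁ χ₂ := by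
    intro χ₁ χ₂
    constructor
    · intro h 𝔄 𝕏 hover hs
      have h1 : sat 𝔄 χ₁ .EA (dualH 𝕏) := ((sat_dual 𝔄 χ₁ 𝕏).2).mp hs
      have h2 : sat 𝔄 χ₂ .EA (dualH 𝕏) := h 𝔄 (dualH 𝕏) (overSup_dualH hover) h1
      exact ((sat_dual 𝔄 χ₂ 𝕏).2).mpr h2
    · intro h 𝔄 𝕏 hover hs
      have h1 : sat 𝔄 χ₁ .AE (dualH 𝕏) := ((sat_dual 𝔄 χ₁ 𝕏).1).mp hs
      have h2 : sat 𝔄 χ₂ .AE (dualH 𝕏) := h 𝔄 (dualH 𝕏) (overSup_dualH hover) h1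
      exact ((sat_dual 𝔄 χ₂ 𝕏).1).mpr h2
  refine ⟨sat_iff φ, imp_iff φ ψ, ?_⟩
  constructor
  · rintro ⟨h1, h2⟩
    exact ⟨(imp_iff φ ψ).mp h1, (imp_iff ψ φ).mp h2⟩
  · rintro ⟨h1, h2⟩
    exact ⟨(imp_iff φ ψ).mpr h1, (imp_iff ψ φ).mpr h2⟩

end ADIF
end
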